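/- arXiv:1811.08122 — 3 statements merged into one kernel-verified Lean document; each statement's English description precedes it below -/
import Mathlib

section
/- Let θ₁ ≤ θ₂ be angles with θ₂ - θ₁ ≤ 2π, set θ_mid = (θ₁+θ₂)/2 and θ_d = θ₂ - θ₁. For a nonzero vector (v,w) ∈ ℝ², the following are equivalent: (1) the angle of (v,w) lies in [θ₁,θ₂] modulo 2π; (2) the angle of Rot((v,w); θ_mid) lies in [-θ_d/2, θ_d/2] modulo 2π; (3) the angle of Fold(Rot((v,w); θ_mid)) lies in [0, θ_d/2] modulo 2π. -/
/-- The angle of a nonzero vector `(v, w)` lies in `[a, b]` modulo `2π`. -/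
def angleIn (v w a b : ℝ) : Prop :=
  ∃ θ ∈ Set.Icc a b, ∃ r > (0 : ℝ), v = r * Real.cos θ ∧ w = r * Real.sin θ

open Real

theorem angleIn_rotate_iff (v w a b c : ℝ) :
    angleIn v w a b ↔
      angleIn (v * cos c + w * sin c) (-v * sin c + w * cos c) (a - c) (b - c) := by
  constructor
  · rintro ⟨θ, ⟨ha, hb⟩, r, hr, hv, hw⟩
    refine ⟨θ - c, ⟨by linarith, by linarith⟩, r, hr, ?_, ?_⟩
    · rw [cos_sub, hv, hw]; ring
    · rw [sin_sub, hv, hw]; ring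
  · rintro ⟨θ, ⟨ha, hb⟩, r, hr, hv, hw⟩
    refine ⟨θ + c, ⟨by linarith, by linarith⟩, r, hr, ?_, ?_⟩
    · rw [cos_add]
      linear_combination cos c * hv - sin c * hw - v * sin_sq_add_cos_sq c
    · rw [sin_add]
      linear_combination sin c * hv + cos c * hw - w * sin_sq_add_cos_sq c

theorem angleIn_neg_iff_angleIn_abs (v w s : ℝ) (hs : s ≤ π) :
    angleIn v w (-s) s ↔ angleIn v |w| 0 s := by
  constructor
  · rintro ⟨θ, ⟨hθs, hθs'⟩, r, hr, hv, hw⟩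
    have hθ : |θ| ≤ s := abs_le.mpr ⟨hθs, hθs'⟩
    refine ⟨|θ|, ⟨abs_nonneg θ, hθ⟩, r, hr, by rwa [cos_abs], ?_⟩
    rw [hw, abs_mul, abs_of_pos hr, abs_sin_eq_sin_abs_of_abs_le_pi (hθ.trans hs)]
  · rintro ⟨θ, ⟨hθ, hθs⟩, r, hr, hv, hw⟩
    rcases le_or_gt 0 w with hw₀ | hw₀
    · exact ⟨θ, ⟨by linarith, hθs⟩, r, hr, hv, by rwa [abs_of_nonneg hw₀] at hw⟩
    · refine ⟨-θ, ⟨by linarith, by linarith⟩, r, hr, by rwa [cos_neg], ?_⟩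
      rw [sin_neg, mul_neg, ← hw, abs_of_neg hw₀, neg_neg]

theorem stmt_3_general (θ₁ θ₂ : ℝ) (hd : θ₂ - θ₁ ≤ 2 * Real.pi)
    (v w : ℝ) :
    let θmid := (θ₁ + θ₂) / 2
    let θd := θ₂ - θ₁
    (angleIn v w θ₁ θ₂ ↔
      angleIn (v * Real.cos θmid + w * Real.sin θmid)
        (-v * Real.sin θmid + w * Real.cos θmid) (-(θd / 2)) (θd / 2)) ∧
    (angleIn v w θ₁ θ₂ ↔
      angleIn (v * Real.cos θmid + w * Real.sin θmid)
        |(-v * Real.sin θmid + w * Real.cos θmid)| 0 (θd / 2)) := by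
  intro θmid θd
  have hlo : θ₁ - θmid = -(θd / 2) := by ring
  have hhi : θ₂ - θmid = θd / 2 := by ring
  have rotate := angleIn_rotate_iff v w θ₁ θ₂ θmid
  rw [hlo, hhi] at rotate
  have hhalf : θd / 2 ≤ π := by linarith
  exact ⟨rotate, rotate.trans (angleIn_neg_iff_angleIn_abs _ _ _ hhalf)⟩

theorem stmt_3 (θ₁ θ₂ : ℝ) (h12 : θ₁ ≤ θ₂) (hd : θ₂ - θ₁ ≤ 2 * Real.pi)
    (v w : ℝ) (hvw : (v, w) ≠ (0, 0)) :
    let θmid := (θ₁ + θ₂) / 2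
    let θd := θ₂ - θ₁
    (angleIn v w θ₁ θ₂ ↔
      angleIn (v * Real.cos θmid + w * Real.sin θmid)
        (-v * Real.sin θmid + w * Real.cos θmid) (-(θd / 2)) (θd / 2)) ∧
    (angleIn v w θ₁ θ₂ ↔
      angleIn (v * Real.cos θmid + w * Real.sin θmid)
        |(-v * Real.sin θmid + w * Real.cos θmid)| 0 (θd / 2)) :=
  stmt_3_general θ₁ θ₂ hd v w
end

section
/- Let ν ≥ 2 and let x, y be real numbers with y ≥ 0 such that y - ((y+1)/2)² sin²(θ) ≤ x² ≤ y + ((y+1)/2)² tan²(θ), where θ = θ_d/2^{ν+1} for some 0 ≤ θ_d ≤ 2π. Then |y - x²| ≤ ((y+1)/2)² tan²(θ) and |√y - |x|| ≤ ((y+1)/2) tan(θ). -/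
/-!
Since `θ ≤ π / 4`, we have `sin² θ ≤ tan² θ`, so the two-sided bound on `x²` gives
`|y - x²| ≤ ((y + 1) / 2)² tan² θ`. The second claim follows from `|√a - √b| ≤ √|a - b|`,
which is the subadditivity of the square root.
-/

open Real

namespace Real

theorem sqrt_add_le_sqrt_add_sqrt (a b : ℝ) : √(a + b) ≤ √a + √b := by
  rcases le_total 0 a with ha | ha
  · rcases le_total 0 b with hb | hb
    · rw [sqrt_le_iff]
      refine ⟨by positivity, ?_⟩
      nlinarith [sq_sqrt ha, sq_sqrt hb, mul_nonneg (sqrt_nonneg a) (sqrt_nonneg b)]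
    · rw [sqrt_eq_zero'.mpr hb, add_zero]
      exact sqrt_le_sqrt (by linarith)
  · rw [sqrt_eq_zero'.mpr ha, zero_add]
    exact sqrt_le_sqrt (by linarith)

theorem abs_sqrt_sub_sqrt_le (a b : ℝ) : |√a - √b| ≤ √|a - b| := by
  have key : ∀ a b : ℝ, √a - √b ≤ √|a - b| := fun a b => by
    have := sqrt_add_le_sqrt_add_sqrt (a - b) b
    rw [sub_add_cancel] at this
    linarith [sqrt_le_sqrt (le_abs_self (a - b))]
  exact abs_sub_le_iff.mpr ⟨key a b, abs_sub_comm a b ▸ key b a⟩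

theorem sin_sq_le_tan_sq {x : ℝ} (hx : cos x ≠ 0) : sin x ^ 2 ≤ tan x ^ 2 := by
  rw [tan_eq_sin_div_cos, div_pow]
  exact le_div_self (sq_nonneg _) (by positivity)
    ((sq_le_one_iff_abs_le_one _).mpr (abs_cos_le_one x))

end Real

theorem div_two_pow_le_pi_div_four {θ : ℝ} (hθ : θ ≤ 2 * π) {ν : ℕ} (hν : 2 ≤ ν) :
    θ / 2 ^ (ν + 1) ≤ π / 4 := by
  have h8 : (8 : ℝ) ≤ 2 ^ (ν + 1) :=
    calc (8 : ℝ) = 2 ^ 3 := by norm_num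
      _ ≤ 2 ^ (ν + 1) := pow_le_pow_right₀ (by norm_num) (by omega)
  rw [div_le_iff₀ (by positivity)]
  nlinarith [pi_pos]

theorem stmt_6 (ν : ℕ) (hν : 2 ≤ ν) (θd : ℝ) (hθd0 : 0 ≤ θd) (hθd : θd ≤ 2 * Real.pi)
    (x y : ℝ) (hy : 0 ≤ y)
    (h1 : y - ((y + 1) / 2) ^ 2 * Real.sin (θd / 2 ^ (ν + 1)) ^ 2 ≤ x ^ 2)
    (h2 : x ^ 2 ≤ y + ((y + 1) / 2) ^ 2 * Real.tan (θd / 2 ^ (ν + 1)) ^ 2) :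
    abs (y - x ^ 2) ≤ ((y + 1) / 2) ^ 2 * Real.tan (θd / 2 ^ (ν + 1)) ^ 2 ∧
      abs (Real.sqrt y - abs x) ≤ ((y + 1) / 2) * Real.tan (θd / 2 ^ (ν + 1)) := by
  set θ := θd / 2 ^ (ν + 1)
  have hθ0 : 0 ≤ θ := by positivity
  have hθ : θ < π / 2 := (div_two_pow_le_pi_div_four hθd hν).trans_lt (by linarith [pi_pos])
  have htan : 0 ≤ tan θ := tan_nonneg_of_nonneg_of_le_pi_div_two hθ0 hθ.le
  have hsin_le_tan := mul_le_mul_of_nonneg_left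
    (sin_sq_le_tan_sq (cos_pos_of_mem_Ioo ⟨by linarith, hθ⟩).ne') (sq_nonneg ((y + 1) / 2))
  have hsq : |y - x ^ 2| ≤ ((y + 1) / 2) ^ 2 * tan θ ^ 2 :=
    abs_sub_le_iff.mpr ⟨by linarith, by linarith⟩
  refine ⟨hsq, ?_⟩
  calc abs (√y - |x|) = |√y - √(x ^ 2)| := by rw [sqrt_sq_eq_abs]
    _ ≤ √|y - x ^ 2| := abs_sqrt_sub_sqrt_le _ _
    _ ≤ √(((y + 1) / 2 * tan θ) ^ 2) := sqrt_le_sqrt (by rwa [mul_pow])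
    _ = (y + 1) / 2 * tan θ := sqrt_sq (by positivity)
end

section
/- Let α ∈ (-3π/2, π/2) with α ≠ -π/2. If x_α is a real number such that (x_α, (x_α²-1)/2) = (r cos α, r sin α) for some r > 0, then x_α = tan α + sec α. -/
/-!
The parabola `y = (x² - 1) / 2` has its focus at the origin and directrix `y = -1`, so a point of it
at polar coordinates `(r, α)` satisfies `r = r sin α + 1`, i.e. `r (1 - sin α) = 1`. Then
`x cos α = r cos² α = r (1 - sin α)(1 + sin α) = 1 + sin α`, which is `x = tan α + sec α`.
-/

open Real

theorem Real.mul_one_sub_sin_eq_one_of_parabola {α r : ℝ} (hr : 0 < r)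
    (h : ((r * cos α) ^ 2 - 1) / 2 = r * sin α) : r * (1 - sin α) = 1 := by
  have hfactor : (r * (1 - sin α) - 1) * (r * (1 + sin α) + 1) = 0 := by
    linear_combination 2 * h - r ^ 2 * sin_sq_add_cos_sq α
  have hpos : 0 < r * (1 + sin α) + 1 := by nlinarith [neg_one_le_sin α]
  linarith [(mul_eq_zero.mp hfactor).resolve_right hpos.ne']

theorem stmt_9_general (α : ℝ) (x : ℝ)
    (h : ∃ r > (0 : ℝ), x = r * Real.cos α ∧ (x ^ 2 - 1) / 2 = r * Real.sin α) :
    x = Real.tan α + 1 / Real.cos α := by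
  obtain ⟨r, hr, rfl, hy⟩ := h
  have hpolar := mul_one_sub_sin_eq_one_of_parabola hr hy
  rw [tan_eq_sin_div_cos, ← add_div]
  rcases eq_or_ne (cos α) 0 with hcos | hcos
  -- At `cos α = 0` both sides are `0`, the right one through Lean's `a / 0 = 0`.
  · simp [hcos]
  · rw [eq_div_iff hcos]
    linear_combination (1 + sin α) * hpolar + r * sin_sq_add_cos_sq α

theorem stmt_9 (α : ℝ) (hα : α ∈ Set.Ioo (-(3 * Real.pi / 2)) (Real.pi / 2))
    (hα' : α ≠ -(Real.pi / 2)) (x : ℝ)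
    (h : ∃ r > (0 : ℝ), x = r * Real.cos α ∧ (x ^ 2 - 1) / 2 = r * Real.sin α) :
    x = Real.tan α + 1 / Real.cos α :=
  stmt_9_general α x h
end
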